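/- Let K ⊆ ℝ³ be compact and Ω = ℝ³ ∖ K. Suppose u and G are both continuous on the closure of Ω and harmonic on Ω, both satisfy u(x) → 1 and G(x) → 1 as ‖x‖ → ∞, u ≥ 0 at every point of the frontier of Ω, and G = 0 at every point of the frontier of Ω. Then u(x) ≥ G(x) for every x ∈ Ω. -/

import Mathlib

/-!
A `C²` function `w` with `Δ w < 0` has no interior local minimum, since the Hessian is positive
semidefinite there. So if `w ≥ 0` on `∂Ω` and `w → 0` at infinity, a negative value of `w` would
make the minimum of `w` over `closure Ω` negative and attained inside `Ω`, which is impossible.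
For `Δ w ≤ 0` apply this to `w - ε φ`, where `φ = -(1 + ‖x‖²)^(-1/2)` is bounded, tends to `0`
at infinity and has `Δ φ > 0` in dimension at least three; then let `ε → 0`. The theorem is the
case `w = u - G`.
-/

open Filter

/-- Euclidean 3-space. -/
noncomputable abbrev E3 := EuclideanSpace ℝ (Fin 3)

/-- The Laplacian of `u : E3 → ℝ` at `x`: the trace of the Hessian, computed as the sum of
the pure second derivatives in the standard coordinate directions. -/
noncomputable def laplacian (u : E3 → ℝ) (x : E3) : ℝ :=
  ∑ i : Fin 3, iteratedFDeriv ℝ 2 u x ![EuclideanSpace.single i 1, EuclideanSpace.single i 1]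

/-- `u` is harmonic on `Ω`: it is `C²` on `Ω` and its Laplacian vanishes on `Ω`. -/
def HarmonicOn (u : E3 → ℝ) (Ω : Set E3) : Prop :=
  ContDiffOn ℝ 2 u Ω ∧ ∀ x ∈ Ω, laplacian u x = 0

open scoped Topology Laplacian RealInnerProductSpace

section LocalMin

variable {E : Type*} [NormedAddCommGroup E] [NormedSpace ℝ E]

/-- If `g'' a < 0`, the second-derivative test makes `a` a local maximum as well, so `g` is
locally constant and `g'' a = 0`. -/
theorem IsLocalMin.deriv_deriv_nonneg {g : ℝ → ℝ} {a : ℝ} (hmin : IsLocalMin g a)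
    (hg : ContinuousAt g a) : 0 ≤ deriv (deriv g) a := by
  by_contra! hneg
  have hmax := isLocalMax_of_deriv_deriv_neg hneg hmin.deriv_eq_zero hg
  have hconst : g =ᶠ[𝓝 a] fun _ => g a := by
    filter_upwards [hmin, hmax] with t h₁ h₂ using le_antisymm h₂ h₁
  rw [hconst.deriv.deriv_eq] at hneg
  simp at hneg

theorem ContDiffAt.deriv_deriv_comp_line {f : E → ℝ} {x : E} (hf : ContDiffAt ℝ 2 f x)
    (v : E) :
    deriv (deriv fun t : ℝ => f (x + t • v)) 0 = iteratedFDeriv ℝ 2 f x ![v, v] := by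
  have hline : ∀ t : ℝ, HasDerivAt (fun t : ℝ => x + t • v) v t := fun t => by
    simpa using ((hasDerivAt_id t).smul_const v).const_add x
  have hfirst :
      (deriv fun t : ℝ => f (x + t • v)) =ᶠ[𝓝 0] fun t => fderiv ℝ f (x + t • v) v := by
    have hcont : ContinuousAt (fun t : ℝ => x + t • v) 0 := (hline 0).continuousAt
    have hx : x + (0 : ℝ) • v = x := by simp
    filter_upwards [hcont.eventually (hx ▸ hf.eventually (by simp))] with t ht
    exact ((ht.differentiableAt (by simp)).hasFDerivAt.comp_hasDerivAt t (hline t)).deriv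
  have hsecond : HasDerivAt (fun t : ℝ => fderiv ℝ f (x + t • v) v)
      (fderiv ℝ (fderiv ℝ f) x v v) 0 := by
    have hd : DifferentiableAt ℝ (fderiv ℝ f) x :=
      (hf.fderiv_right (m := 1) le_rfl).differentiableAt one_ne_zero
    exact ((ContinuousLinearMap.apply ℝ ℝ v).hasFDerivAt.comp x
      hd.hasFDerivAt).comp_hasDerivAt_of_eq 0 (hline 0) (by simp)
  rw [hfirst.deriv_eq, hsecond.deriv, iteratedFDeriv_two_apply]
  rfl

theorem IsLocalMin.iteratedFDeriv_two_nonneg {f : E → ℝ} {x : E} (hmin : IsLocalMin f x)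
    (hf : ContDiffAt ℝ 2 f x) (v : E) : 0 ≤ iteratedFDeriv ℝ 2 f x ![v, v] := by
  rw [← hf.deriv_deriv_comp_line v]
  have hline : ContinuousAt (fun t : ℝ => x + t • v) 0 := by fun_prop
  have hx : x + (0 : ℝ) • v = x := by simp
  refine IsLocalMin.deriv_deriv_nonneg ?_ (hf.continuousAt.comp_of_eq hline hx)
  have hmin' : IsLocalMin f (x + (0 : ℝ) • v) := by rwa [hx]
  exact hmin'.comp_continuous (g := fun t : ℝ => x + t • v) hline

theorem IsLocalMin.laplacian_nonneg {F : Type*} [NormedAddCommGroup F] [InnerProductSpace ℝ F]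
    [FiniteDimensional ℝ F] {f : F → ℝ} {x : F} (hmin : IsLocalMin f x)
    (hf : ContDiffAt ℝ 2 f x) : 0 ≤ Δ f x := by
  rw [InnerProductSpace.laplacian_eq_iteratedFDeriv_stdOrthonormalBasis]
  exact Finset.sum_nonneg fun i _ => hmin.iteratedFDeriv_two_nonneg hf _

end LocalMin

section Barrier

variable {E : Type*} [NormedAddCommGroup E]

noncomputable def subharmonicBarrier (x : E) : ℝ := -(1 + ‖x‖ ^ 2) ^ (-(1 / 2) : ℝ)

theorem subharmonicBarrier_nonpos (x : E) : subharmonicBarrier x ≤ 0 :=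
  neg_nonpos.2 (by positivity)

theorem neg_one_le_subharmonicBarrier (x : E) : -1 ≤ subharmonicBarrier x :=
  neg_le_neg (Real.rpow_le_one_of_one_le_of_nonpos (by nlinarith [sq_nonneg ‖x‖]) (by norm_num))

theorem tendsto_subharmonicBarrier_cocompact [ProperSpace E] :
    Tendsto (subharmonicBarrier : E → ℝ) (cocompact E) (𝓝 0) := by
  have h : Tendsto (fun x : E => 1 + ‖x‖ ^ 2) (cocompact E) atTop :=
    tendsto_atTop_add_const_left _ _
      ((tendsto_pow_atTop two_ne_zero).comp tendsto_norm_cocompact_atTop)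
  have h := ((tendsto_rpow_neg_atTop (by norm_num : (0 : ℝ) < 1 / 2)).comp h).neg
  rwa [neg_zero] at h

variable [InnerProductSpace ℝ E]

theorem contDiff_subharmonicBarrier {n : WithTop ℕ∞} :
    ContDiff ℝ n (subharmonicBarrier : E → ℝ) :=
  ((contDiff_const.add (contDiff_norm_sq ℝ)).rpow_const_of_ne fun x => by positivity).neg

theorem hasFDerivAt_one_add_norm_sq_rpow (p : ℝ) (x : E) :
    HasFDerivAt (fun y : E => (1 + ‖y‖ ^ 2) ^ p)
      ((2 * p * (1 + ‖x‖ ^ 2) ^ (p - 1)) • innerSL ℝ x) x := by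
  have hpos : 1 + ‖x‖ ^ 2 ≠ 0 := by positivity
  have h := (Real.hasDerivAt_rpow_const (p := p) (Or.inl hpos)).comp_hasFDerivAt x
    ((hasStrictFDerivAt_norm_sq x).hasFDerivAt.const_add 1)
  refine h.congr_fderiv ?_
  rw [← Nat.cast_smul_eq_nsmul ℝ, smul_smul]
  congr 1
  ring

theorem hasFDerivAt_subharmonicBarrier (x : E) :
    HasFDerivAt subharmonicBarrier ((1 + ‖x‖ ^ 2) ^ (-(3 / 2) : ℝ) • innerSL ℝ x) x := by
  refine (hasFDerivAt_one_add_norm_sq_rpow (-(1 / 2)) x).neg.congr_fderiv ?_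
  rw [← neg_smul]
  norm_num

theorem iteratedFDeriv_two_subharmonicBarrier (x e : E) :
    iteratedFDeriv ℝ 2 subharmonicBarrier x ![e, e] =
      (1 + ‖x‖ ^ 2) ^ (-(3 / 2) : ℝ) * ‖e‖ ^ 2 -
        3 * (1 + ‖x‖ ^ 2) ^ (-(5 / 2) : ℝ) * ⟪x, e⟫ ^ 2 := by
  have hfderiv : fderiv ℝ (subharmonicBarrier : E → ℝ) =
      fun y => (1 + ‖y‖ ^ 2) ^ (-(3 / 2) : ℝ) • innerSL ℝ y :=
    funext fun y => (hasFDerivAt_subharmonicBarrier y).fderiv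
  have h : HasFDerivAt (fun y => (1 + ‖y‖ ^ 2) ^ (-(3 / 2) : ℝ) • innerSL ℝ y) _ x :=
    (hasFDerivAt_one_add_norm_sq_rpow (-(3 / 2)) x).smul (innerSL ℝ (E := E)).hasFDerivAt
  rw [iteratedFDeriv_two_apply, hfderiv, h.fderiv]
  simp [real_inner_comm e x]
  -- `innerSL` is applied here at a `NormedSpace ℝ ℝ` instance that is only defeq to its own
  erw [innerSL_apply_apply]
  rw [real_inner_self_eq_norm_sq]
  norm_num
  ring

theorem laplacian_subharmonicBarrier_pos [FiniteDimensional ℝ E]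
    (hE : 3 ≤ Module.finrank ℝ E) (x : E) : 0 < Δ (subharmonicBarrier : E → ℝ) x := by
  have hq : 0 < 1 + ‖x‖ ^ 2 := by positivity
  have hpow :
      (1 + ‖x‖ ^ 2) ^ (-(3 / 2) : ℝ) = (1 + ‖x‖ ^ 2) ^ (-(5 / 2) : ℝ) * (1 + ‖x‖ ^ 2) := by
    rw [← Real.rpow_add_one hq.ne']
    norm_num
  have hΔ : Δ (subharmonicBarrier : E → ℝ) x = (1 + ‖x‖ ^ 2) ^ (-(5 / 2) : ℝ) *
      ((Module.finrank ℝ E - 3) * ‖x‖ ^ 2 + Module.finrank ℝ E) := by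
    rw [InnerProductSpace.laplacian_eq_iteratedFDeriv_stdOrthonormalBasis]
    simp only [iteratedFDeriv_two_subharmonicBarrier, OrthonormalBasis.norm_eq_one, one_pow,
      mul_one, Finset.sum_sub_distrib, ← Finset.mul_sum, OrthonormalBasis.sum_sq_inner_left,
      Finset.sum_const, Finset.card_univ, Fintype.card_fin, nsmul_eq_mul, hpow]
    ring
  have hdim : (3 : ℝ) ≤ Module.finrank ℝ E := by exact_mod_cast hE
  rw [hΔ]
  have : 0 ≤ ((Module.finrank ℝ E : ℝ) - 3) * ‖x‖ ^ 2 := by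
    have := sub_nonneg.2 hdim
    positivity
  positivity

end Barrier

section MinimumPrinciple

variable {E : Type*} [NormedAddCommGroup E] [InnerProductSpace ℝ E] [FiniteDimensional ℝ E]
  {Ω : Set E} {w : E → ℝ}

theorem nonneg_of_laplacian_neg (hΩ : IsOpen Ω) (hcont : ContinuousOn w (closure Ω))
    (hw : ContDiffOn ℝ 2 w Ω) (hΔ : ∀ x ∈ Ω, Δ w x < 0)
    (hlim : Tendsto w (cocompact E) (𝓝 0)) (hbdry : ∀ p ∈ frontier Ω, 0 ≤ w p) :
    ∀ x ∈ Ω, 0 ≤ w x := by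
  intro x hx
  by_contra! hneg
  have hev : ∀ᶠ y in cocompact E ⊓ 𝓟 (closure Ω), w x ≤ w y :=
    ((hlim.eventually (lt_mem_nhds hneg)).mono fun _ => le_of_lt).filter_mono inf_le_left
  obtain ⟨x₀, hx₀, hmin⟩ := hcont.exists_isMinOn' isClosed_closure (subset_closure hx) hev
  have hx₀Ω : x₀ ∈ Ω := by
    by_contra hx₀Ω
    have hle : w x₀ ≤ w x := hmin (subset_closure hx)
    linarith [hbdry x₀ ⟨hx₀, by rwa [hΩ.interior_eq]⟩]
  have hlocal : IsLocalMin w x₀ :=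
    Filter.mem_of_superset (hΩ.mem_nhds hx₀Ω) fun y hy => hmin (subset_closure hy)
  linarith [hlocal.laplacian_nonneg (hw.contDiffAt (hΩ.mem_nhds hx₀Ω)), hΔ x₀ hx₀Ω]

theorem nonneg_of_laplacian_nonpos (hE : 3 ≤ Module.finrank ℝ E) (hΩ : IsOpen Ω)
    (hcont : ContinuousOn w (closure Ω)) (hw : ContDiffOn ℝ 2 w Ω)
    (hΔ : ∀ x ∈ Ω, Δ w x ≤ 0) (hlim : Tendsto w (cocompact E) (𝓝 0))
    (hbdry : ∀ p ∈ frontier Ω, 0 ≤ w p) :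
    ∀ x ∈ Ω, 0 ≤ w x := by
  intro x hx
  refine le_of_forall_pos_le_add fun ε hε => ?_
  have hφ : ContDiff ℝ 2 (ε • subharmonicBarrier : E → ℝ) :=
    contDiff_subharmonicBarrier.const_smul ε
  set v : E → ℝ := w - ε • subharmonicBarrier
  have hΔv : ∀ y ∈ Ω, Δ v y < 0 := fun y hy => by
    rw [(hw.contDiffAt (hΩ.mem_nhds hy)).laplacian_sub hφ.contDiffAt,
      InnerProductSpace.laplacian_smul ε contDiff_subharmonicBarrier.contDiffAt, smul_eq_mul]
    nlinarith [hΔ y hy, laplacian_subharmonicBarrier_pos hE y]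
  have hvlim : Tendsto v (cocompact E) (𝓝 0) := by
    have h := hlim.sub (tendsto_subharmonicBarrier_cocompact.const_smul ε)
    rwa [smul_zero, sub_zero] at h
  have hvbdry : ∀ p ∈ frontier Ω, 0 ≤ v p := fun p hp =>
    sub_nonneg.2 ((mul_nonpos_of_nonneg_of_nonpos hε.le (subharmonicBarrier_nonpos p)).trans
      (hbdry p hp))
  have hvx : 0 ≤ w x - ε * subharmonicBarrier x :=
    nonneg_of_laplacian_neg hΩ (hcont.sub hφ.continuous.continuousOn) (hw.sub hφ.contDiffOn)
      hΔv hvlim hvbdry x hx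
  nlinarith [neg_one_le_subharmonicBarrier x]

end MinimumPrinciple

theorem laplacian_eq_innerProductSpace_laplacian (u : E3 → ℝ) : laplacian u = Δ u := by
  rw [InnerProductSpace.laplacian_eq_iteratedFDeriv_orthonormalBasis u
    (EuclideanSpace.basisFun (Fin 3) ℝ)]
  funext x
  simp [laplacian, EuclideanSpace.basisFun_apply]

theorem HarmonicOn.laplacian_eq_zero {u : E3 → ℝ} {Ω : Set E3} (hu : HarmonicOn u Ω) :
    ∀ x ∈ Ω, Δ u x = 0 := by
  simpa only [laplacian_eq_innerProductSpace_laplacian] using hu.2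

/-- Comparison with the Green function at infinity: if `u` and `G` are continuous on the
closure of `Ω = ℝ³ ∖ K`, harmonic on `Ω`, both tend to `1` at infinity, `u ≥ 0` on the
frontier of `Ω` and `G = 0` on the frontier of `Ω`, then `u ≥ G` on `Ω`. -/
theorem static_potential_ge_green_function
    (K : Set E3) (hK : IsCompact K) (u G : E3 → ℝ)
    (hucont : ContinuousOn u (closure Kᶜ)) (hGcont : ContinuousOn G (closure Kᶜ))
    (huharm : HarmonicOn u Kᶜ) (hGharm : HarmonicOn G Kᶜ)
    (hulim : Tendsto u (Filter.cocompact E3) (nhds 1))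
    (hGlim : Tendsto G (Filter.cocompact E3) (nhds 1))
    (hubdry : ∀ p ∈ frontier Kᶜ, 0 ≤ u p)
    (hGbdry : ∀ p ∈ frontier Kᶜ, G p = 0) :
    ∀ x ∈ Kᶜ, G x ≤ u x := by
  have hΩ : IsOpen Kᶜ := hK.isClosed.isOpen_compl
  have hΔ : ∀ y ∈ Kᶜ, Δ (u - G) y ≤ 0 := fun y hy => by
    rw [(huharm.1.contDiffAt (hΩ.mem_nhds hy)).laplacian_sub
      (hGharm.1.contDiffAt (hΩ.mem_nhds hy)), huharm.laplacian_eq_zero y hy,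
      hGharm.laplacian_eq_zero y hy, sub_zero]
  have hlim : Tendsto (u - G) (cocompact E3) (𝓝 0) := by
    rw [← sub_self (1 : ℝ)]
    exact hulim.sub hGlim
  have hbdry : ∀ p ∈ frontier Kᶜ, 0 ≤ (u - G) p := fun p hp => by
    simpa [hGbdry p hp] using hubdry p hp
  exact fun x hx => sub_nonneg.1 <| nonneg_of_laplacian_nonpos (by simp) hΩ
    (hucont.sub hGcont) (huharm.1.sub hGharm.1) hΔ hlim hbdry x hx
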